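/- For every y ∈ [0,2) ∩ ℤ[φ], one has R(y) ∈ ℤ[φ] and R(y) − y ∈ 2ℤ[φ]; that is, R preserves ℤ[φ] ∩ [0,2) and acts on it as the identity modulo 2ℤ[φ]. -/

import Mathlib

open Set

noncomputable section

/-- The golden ratio `(1+√5)/2`. -/
def gold : ℝ := (1 + Real.sqrt 5) / 2

/-- The ring `ℤ[φ]`. -/
def Zgold : Set ℝ := {x | ∃ m n : ℤ, x = m + n * gold}

/-- The set `2ℤ[φ]`. -/
def twoZgold : Set ℝ := {x | ∃ m n : ℤ, x = 2 * m + 2 * n * gold}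

/-- The renormalization map `R` on `[0,2)`. -/
def Rmap (y : ℝ) : ℝ :=
  if y < 2 - gold then gold ^ 3 * y
  else if y < 4 - 2 * gold then y + 2 * gold - 2
  else if y < 2 * gold - 2 then gold ^ 3 * y - 2 * gold
  else if y < gold then y - 2 * gold + 2
  else gold ^ 3 * y - 4 * gold

/-
On each of the five pieces `R(y) - y` is `2φy`, `2φ(y - 1)`, `2φ(y - 2)` or `±2(φ - 1)`, because
`φ³ - 1 = 2φ`. Since `ℤ[φ]` is closed under multiplication by `φ` (as `φ² = φ + 1`), each of these
is twice an element of `ℤ[φ]`, and `ℤ[φ]` is closed under adding such differences.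
-/

lemma gold_sq : gold ^ 2 = gold + 1 := by
  have h5 : Real.sqrt 5 ^ 2 = 5 := Real.sq_sqrt (by norm_num)
  unfold gold
  linear_combination h5 / 4

lemma gold_pow_three : gold ^ 3 = 2 * gold + 1 := by
  linear_combination (gold + 1) * gold_sq

lemma add_mem_Zgold {x y : ℝ} (hx : x ∈ Zgold) (hy : y ∈ Zgold) : x + y ∈ Zgold := by
  obtain ⟨m, n, rfl⟩ := hx
  obtain ⟨m', n', rfl⟩ := hy
  exact ⟨m + m', n + n', by push_cast; ring⟩

lemma sub_mem_Zgold {x y : ℝ} (hx : x ∈ Zgold) (hy : y ∈ Zgold) : x - y ∈ Zgold := by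
  obtain ⟨m, n, rfl⟩ := hx
  obtain ⟨m', n', rfl⟩ := hy
  exact ⟨m - m', n - n', by push_cast; ring⟩

lemma gold_mul_mem_Zgold {y : ℝ} (hy : y ∈ Zgold) : gold * y ∈ Zgold := by
  obtain ⟨m, n, rfl⟩ := hy
  exact ⟨n, m + n, by push_cast; linear_combination n * gold_sq⟩

lemma mem_twoZgold_iff {x : ℝ} : x ∈ twoZgold ↔ ∃ z ∈ Zgold, x = 2 * z := by
  constructor
  · rintro ⟨m, n, rfl⟩
    exact ⟨m + n * gold, ⟨m, n, rfl⟩, by ring⟩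
  · rintro ⟨z, ⟨m, n, rfl⟩, rfl⟩
    exact ⟨m, n, by ring⟩

lemma twoZgold_subset_Zgold : twoZgold ⊆ Zgold := by
  intro x hx
  obtain ⟨z, hz, rfl⟩ := mem_twoZgold_iff.mp hx
  simpa only [two_mul] using add_mem_Zgold hz hz

lemma Rmap_sub_self_mem_twoZgold {y : ℝ} (hy : y ∈ Zgold) : Rmap y - y ∈ twoZgold := by
  have hy₁ : gold * (y - 1) ∈ Zgold := gold_mul_mem_Zgold (sub_mem_Zgold hy ⟨1, 0, by simp⟩)
  have hy₂ : gold * (y - 2) ∈ Zgold := gold_mul_mem_Zgold (sub_mem_Zgold hy ⟨2, 0, by simp⟩)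
  rw [mem_twoZgold_iff]
  unfold Rmap
  split_ifs
  · exact ⟨gold * y, gold_mul_mem_Zgold hy, by rw [gold_pow_three]; ring⟩
  · exact ⟨gold - 1, ⟨-1, 1, by push_cast; ring⟩, by ring⟩
  · exact ⟨gold * (y - 1), hy₁, by rw [gold_pow_three]; ring⟩
  · exact ⟨1 - gold, ⟨1, -1, by push_cast; ring⟩, by ring⟩
  · exact ⟨gold * (y - 2), hy₂, by rw [gold_pow_three]; ring⟩

theorem Rmap_preserves_Zgold_general (y : ℝ) (hZ : y ∈ Zgold) :
    Rmap y ∈ Zgold ∧ Rmap y - y ∈ twoZgold := by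
  have hR : Rmap y - y ∈ twoZgold := Rmap_sub_self_mem_twoZgold hZ
  refine ⟨?_, hR⟩
  simpa using add_mem_Zgold hZ (twoZgold_subset_Zgold hR)

/-- `R` preserves `ℤ[φ] ∩ [0,2)` and acts on it as the identity modulo `2ℤ[φ]`. -/
theorem Rmap_preserves_Zgold (y : ℝ) (hy : y ∈ Set.Ico (0 : ℝ) 2) (hZ : y ∈ Zgold) :
    Rmap y ∈ Zgold ∧ Rmap y - y ∈ twoZgold :=
  Rmap_preserves_Zgold_general y hZ
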